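/- arXiv:2312.12326 — 2 statements merged into one kernel-verified Lean document; each statement's English description precedes it below -/
import Mathlib

section
/- In the layered DLA process with layer sizes N_1, …, N_k coupled with its upper-blocked process, the following hold: (i) for all i and t, B_i(t) ⊆ B̂_i(t), and hence L_i(t) ≤ L̂_i(t) and L̂_k(t) = t; (ii) on the event that L̂_j(t) < N_j for every j, the conditional expectation satisfies E(L̂_i(t+1) | Ĥ(t)) = L̂_i(t) + L̂_{i+1}(t)/N_{i+1} for every 0 ≤ i ≤ k, where L̂_{k+1}(t) = 1 and N_{k+1} = 1. -/
open Finset Filter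
open scoped Classical

namespace LayeredDLA

/-- The vertices of the layered graph: a source `v` (level `0`), a sink `z`
(level `k+1`), and `N i` vertices in layer `i+1` for each `i : Fin k`. -/
inductive Vertex (k : ℕ) (N : Fin k → ℕ) : Type where
  | source : Vertex k N
  | sink : Vertex k N
  | mid (i : Fin k) (x : Fin (N i)) : Vertex k N

/-- A particle's random walk is determined by its choice of one vertex in each layer. -/
abbrev Particle (k : ℕ) (N : Fin k → ℕ) : Type := ∀ i : Fin k, Fin (N i)

/-- The vertex at level `j` (for `0 ≤ j ≤ k+1`) on the walk of a particle `u`. -/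
def walkVertex {k : ℕ} {N : Fin k → ℕ} (u : Particle k N) (j : ℕ) : Vertex k N :=
  if h : 1 ≤ j ∧ j ≤ k then Vertex.mid ⟨j - 1, by omega⟩ (u ⟨j - 1, by omega⟩)
  else if j = 0 then Vertex.source else Vertex.sink

/-- The level at which a particle `u` halts, given the current cluster `C`:
the least `i` such that the walk vertex at level `i+1` is occupied.
(Since the sink is always in the cluster, this is at most `k`.) -/
noncomputable def haltLevel {k : ℕ} {N : Fin k → ℕ} (C : Finset (Vertex k N))
    (u : Particle k N) : ℕ :=
  sInf {i | walkVertex u (i + 1) ∈ C}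

/-- One step of the DLA process: the state is the pair (occupied vertices, recorded
directed edges).  Once the source is occupied the process has finished and the
state no longer changes. -/
noncomputable def stepCluster {k : ℕ} {N : Fin k → ℕ}
    (s : Finset (Vertex k N) × Finset (Vertex k N × Vertex k N)) (u : Particle k N) :
    Finset (Vertex k N) × Finset (Vertex k N × Vertex k N) :=
  if Vertex.source ∈ s.1 then s
  else
    (insert (walkVertex u (haltLevel s.1 u)) s.1,
     insert (walkVertex u (haltLevel s.1 u), walkVertex u (haltLevel s.1 u + 1)) s.2)

/-- The cluster (occupied vertices, recorded edges) after `t` steps, driven by the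
sequence of particles `ω`.  Initially only the sink is occupied. -/
noncomputable def clusterAt {k : ℕ} {N : Fin k → ℕ} (ω : ℕ → Particle k N) :
    ℕ → Finset (Vertex k N) × Finset (Vertex k N × Vertex k N)
  | 0 => ({Vertex.sink}, ∅)
  | t + 1 => stepCluster (clusterAt ω t) (ω t)

/-- The finish time: the first step at which the source is occupied. -/
noncomputable def finishTime {k : ℕ} {N : Fin k → ℕ} (ω : ℕ → Particle k N) : ℕ :=
  sInf {t | Vertex.source ∈ (clusterAt ω t).1}

/-- The level of a vertex: source is `0`, layer `i+1` for `mid i x`, sink is `k+1`. -/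
def levelOf {k : ℕ} {N : Fin k → ℕ} : Vertex k N → ℕ
  | Vertex.source => 0
  | Vertex.sink => k + 1
  | Vertex.mid i _ => (i : ℕ) + 1

/-- `L_i(t)`: the number of occupied vertices at level `i` after `t` steps. -/
noncomputable def levelCount {k : ℕ} {N : Fin k → ℕ} (ω : ℕ → Particle k N) (i t : ℕ) : ℕ :=
  ((clusterAt ω t).1.filter fun w => levelOf w = i).card

/-- The probability of an event `E` of the DLA process: the particles are
independent and uniform.  Since the process finishes (and freezes) after at most
`1 + ∑ i, N i` steps, it suffices to sample that many particles uniformly;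
subsequent particles are irrelevant to the process. -/
noncomputable def prob (k : ℕ) (N : Fin k → ℕ) (E : (ℕ → Particle k N) → Prop) : ℝ :=
  ((Finset.univ.filter fun f : Fin (1 + ∑ i, N i) → Particle k N =>
      E fun t => f ⟨t % (1 + ∑ i, N i), Nat.mod_lt _ (by omega)⟩).card : ℝ) /
    (Fintype.card (Fin (1 + ∑ i, N i) → Particle k N) : ℝ)

end LayeredDLA

open LayeredDLA

namespace LayeredDLA

/-- `N_j` as a real number, for a level `1 ≤ j ≤ k`; by convention `N_0 = N_{k+1} = 1`. -/
def Nlevel {k : ℕ} (N : Fin k → ℕ) (j : ℕ) : ℝ :=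
  if h : 1 ≤ j ∧ j ≤ k then (N ⟨j - 1, by omega⟩ : ℝ) else 1

/-- The product `N_k · N_{k−1} ⋯ N_{k−j+1}` (an empty product for `j = 0`). -/
def Nprod {k : ℕ} (N : Fin k → ℕ) (j : ℕ) : ℝ :=
  ∏ l ∈ Finset.range j, Nlevel N (k - l)

/-- `μ_{k−j}(t) = t^(j+1) / ((j+1)! · N_k N_{k−1} ⋯ N_{k−j+1})`. -/
noncomputable def mu {k : ℕ} (N : Fin k → ℕ) (j t : ℕ) : ℝ :=
  (t : ℝ) ^ (j + 1) / ((Nat.factorial (j + 1) : ℝ) * Nprod N j)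

end LayeredDLA

namespace LayeredDLA

/-- Add a blocked vertex to a level of the upper-blocked process: add `x` if it is
not yet blocked, and otherwise some other unblocked vertex (here the least one),
if any exists. -/
def addBlocked {n : ℕ} (B : Finset (Fin n)) (x : Fin n) : Finset (Fin n) :=
  if x ∈ B then (if h : Bᶜ.Nonempty then insert (Bᶜ.min' h) B else B) else insert x B

/-- Whether the walk vertex of the particle `u` at level `j` is blocked in the
upper-blocked state `B` (the sink, at level `k+1`, is always blocked). -/
def upTest {k : ℕ} {N : Fin k → ℕ} (B : ∀ i : Fin k, Finset (Fin (N i)))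
    (u : Particle k N) (j : ℕ) : Prop :=
  if h : 1 ≤ j ∧ j ≤ k then
    have hj : j - 1 < k := by omega
    u ⟨j - 1, hj⟩ ∈ B ⟨j - 1, hj⟩
  else True

/-- One step of the upper-blocked process: the state is a pair (is the source
blocked, blocked vertices of each layer).  For every level `j = 0, …, k`, if the
walk vertex of the particle at level `j+1` is blocked, then level `j` gains a
blocked vertex. -/
noncomputable def stepUpper {k : ℕ} {N : Fin k → ℕ}
    (s : Bool × ∀ i : Fin k, Finset (Fin (N i))) (u : Particle k N) :
    Bool × ∀ i : Fin k, Finset (Fin (N i)) :=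
  ((if upTest s.2 u 1 then true else s.1),
   fun i => if upTest s.2 u ((i : ℕ) + 2) then addBlocked (s.2 i) (u i) else s.2 i)

/-- The upper-blocked process after `t` steps, coupled to the DLA process by being
driven by the same particle sequence `ω`. -/
noncomputable def upperAt {k : ℕ} {N : Fin k → ℕ} (ω : ℕ → Particle k N) :
    ℕ → Bool × ∀ i : Fin k, Finset (Fin (N i))
  | 0 => (false, fun _ => ∅)
  | t + 1 => stepUpper (upperAt ω t) (ω t)

/-- `L̂_i(t)`: the number of blocked vertices at level `i` after `t` steps of the
upper-blocked process (with the conventions `L̂_0 ∈ {0,1}` and `L̂_{k+1} = 1`). -/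
noncomputable def upCount {k : ℕ} {N : Fin k → ℕ} (ω : ℕ → Particle k N) (i t : ℕ) : ℕ :=
  if h : 1 ≤ i ∧ i ≤ k then ((upperAt ω t).2 ⟨i - 1, by omega⟩).card
  else if i = 0 then (if (upperAt ω t).1 then 1 else 0) else 1

end LayeredDLA

/-!
Both processes are driven by the same particles. When the DLA particle stops at level `m`, its
vertex `u_{m+1}` is occupied, hence by induction blocked, and the rule of the upper-blocked
process blocks `u_m` at the same step; so every occupied vertex is blocked. Below capacity a
triggered level gains exactly one blocked vertex, and level `i` is triggered exactly when the
uniform coordinate `u_{i+1}` falls into `B̂_{i+1}`, an event of probability `L̂_{i+1}/N_{i+1}`.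
-/

open scoped BigOperators

theorem Fintype.expect_comp_eval {ι M : Type*} [Fintype ι] [DecidableEq ι] {α : ι → Type*}
    [∀ i, Fintype (α i)] [∀ i, Nonempty (α i)] [AddCommMonoid M] [Module ℚ≥0 M]
    (i : ι) (f : α i → M) :
    𝔼 u : (∀ j, α j), f (u i) = 𝔼 x, f x := by
  rw [Fintype.expect_equiv (Equiv.piSplitAt i α) (fun u => f (u i)) (fun p => f p.1) fun _ => rfl,
    ← Finset.univ_product_univ, Finset.expect_product' Finset.univ Finset.univ fun x _ => f x]
  simp only [Fintype.expect_const]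

namespace LayeredDLA

variable {k : ℕ} {N : Fin k → ℕ}

theorem exists_fin_add_one_eq {i : ℕ} (h0 : 0 < i) (hi : i ≤ k) : ∃ l : Fin k, (l : ℕ) + 1 = i :=
  ⟨⟨i - 1, by omega⟩, by simp only; omega⟩

section Levels

variable (u : Particle k N) (B : ∀ i : Fin k, Finset (Fin (N i))) (ω : ℕ → Particle k N) (t : ℕ)

theorem walkVertex_zero : walkVertex u 0 = Vertex.source := rfl

theorem walkVertex_succ (l : Fin k) : walkVertex u (l + 1) = Vertex.mid l (u l) := by
  simp [walkVertex]

theorem walkVertex_sink : walkVertex u (k + 1) = Vertex.sink := by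
  simp [walkVertex]

theorem upTest_succ (l : Fin k) : upTest B u (l + 1) ↔ u l ∈ B l := by
  simp [upTest]

theorem upTest_sink : upTest B u (k + 1) := by
  simp [upTest]

theorem upCount_zero : upCount ω 0 t = if (upperAt ω t).1 then 1 else 0 := by
  simp [upCount]

theorem upCount_succ (l : Fin k) : upCount ω (l + 1) t = ((upperAt ω t).2 l).card := by
  simp [upCount]

theorem upCount_sink : upCount ω (k + 1) t = 1 := by
  simp [upCount]

theorem Nlevel_zero : Nlevel N 0 = 1 := by
  simp [Nlevel]

theorem Nlevel_succ (l : Fin k) : Nlevel N (l + 1) = N l := by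
  simp [Nlevel]

theorem Nlevel_sink : Nlevel N (k + 1) = 1 := by
  simp [Nlevel]

end Levels

section AddBlocked

variable {n : ℕ} (B : Finset (Fin n)) (x : Fin n)

theorem subset_addBlocked : B ⊆ addBlocked B x := by
  unfold addBlocked
  split_ifs
  exacts [Finset.subset_insert _ _, subset_rfl, Finset.subset_insert _ _]

theorem mem_addBlocked : x ∈ addBlocked B x := by
  unfold addBlocked
  split_ifs with hx
  exacts [Finset.mem_insert_of_mem hx, hx, Finset.mem_insert_self _ _]

theorem card_addBlocked (hB : B.card < n) : (addBlocked B x).card = B.card + 1 := by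
  have hne : Bᶜ.Nonempty := by
    rw [← Finset.card_pos, Finset.card_compl, Fintype.card_fin]
    omega
  unfold addBlocked
  split_ifs with hx
  · exact Finset.card_insert_of_notMem (Finset.mem_compl.1 (Finset.min'_mem _ hne))
  · exact Finset.card_insert_of_notMem hx

end AddBlocked

def IsBlocked (s : Bool × ∀ i : Fin k, Finset (Fin (N i))) : Vertex k N → Prop
  | Vertex.source => s.1 = true
  | Vertex.sink => True
  | Vertex.mid i x => x ∈ s.2 i

section StepUpper

variable (s : Bool × ∀ i : Fin k, Finset (Fin (N i))) (u : Particle k N)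

theorem upTest_iff_isBlocked_walkVertex {j : ℕ} (hj : 1 ≤ j) :
    upTest s.2 u j ↔ IsBlocked s (walkVertex u j) := by
  rcases lt_or_ge k j with hkj | hjk
  · simp [upTest, walkVertex, IsBlocked, show ¬ j ≤ k by omega, show j ≠ 0 by omega]
  · obtain ⟨l, rfl⟩ := exists_fin_add_one_eq hj hjk
    rw [upTest_succ, walkVertex_succ]
    rfl

theorem card_stepUpper_snd (l : Fin k) (hl : (s.2 l).card < N l) :
    ((stepUpper s u).2 l).card = (s.2 l).card + if upTest s.2 u (l + 2) then 1 else 0 := by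
  by_cases hT : upTest s.2 u (l + 2)
  · simp only [stepUpper, if_pos hT]
    exact card_addBlocked _ _ (by simpa using hl)
  · simp [stepUpper, hT]

theorem IsBlocked.stepUpper {w : Vertex k N} (hw : IsBlocked s w) :
    IsBlocked (stepUpper s u) w := by
  cases w with
  | source => simp_all [IsBlocked, LayeredDLA.stepUpper]
  | sink => trivial
  | mid i x =>
    simp only [IsBlocked, LayeredDLA.stepUpper] at hw ⊢
    split_ifs
    exacts [subset_addBlocked _ _ hw, hw]

theorem isBlocked_stepUpper_walkVertex {m : ℕ} (hm : m ≤ k) (hT : upTest s.2 u (m + 1)) :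
    IsBlocked (stepUpper s u) (walkVertex u m) := by
  rcases Nat.eq_zero_or_pos m with rfl | hm0
  · simp [IsBlocked, LayeredDLA.stepUpper, walkVertex_zero, hT]
  · obtain ⟨l, rfl⟩ := exists_fin_add_one_eq hm0 hm
    simp only [walkVertex_succ, IsBlocked, LayeredDLA.stepUpper]
    rw [if_pos hT]
    exact mem_addBlocked _ _

end StepUpper

section Coupling

theorem haltLevel_le {C : Finset (Vertex k N)} (hC : Vertex.sink ∈ C) (u : Particle k N) :
    haltLevel C u ≤ k :=
  Nat.sInf_le (by simpa [walkVertex_sink] using hC)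

theorem walkVertex_haltLevel_succ_mem {C : Finset (Vertex k N)} (hC : Vertex.sink ∈ C)
    (u : Particle k N) : walkVertex u (haltLevel C u + 1) ∈ C :=
  Nat.sInf_mem (s := {i | walkVertex u (i + 1) ∈ C}) ⟨k, by simpa [walkVertex_sink] using hC⟩

variable (ω : ℕ → Particle k N)

theorem sink_mem_clusterAt (t : ℕ) : Vertex.sink ∈ (clusterAt ω t).1 := by
  induction t with
  | zero => simp [clusterAt]
  | succ t ih =>
    rw [clusterAt, stepCluster]
    split_ifs
    exacts [ih, Finset.mem_insert_of_mem ih]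

theorem isBlocked_of_mem_clusterAt (t : ℕ) :
    ∀ w ∈ (clusterAt ω t).1, IsBlocked (upperAt ω t) w := by
  induction t with
  | zero => simp [clusterAt, IsBlocked]
  | succ t ih =>
    rw [clusterAt, upperAt, stepCluster]
    split_ifs
    · exact fun w hw => (ih w hw).stepUpper _ _
    · have hC := sink_mem_clusterAt ω t
      have hT : upTest (upperAt ω t).2 (ω t) (haltLevel (clusterAt ω t).1 (ω t) + 1) :=
        (upTest_iff_isBlocked_walkVertex _ _ (by omega)).2
          (ih _ (walkVertex_haltLevel_succ_mem hC _))
      rintro w hw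
      rcases Finset.mem_insert.1 hw with rfl | hw
      exacts [isBlocked_stepUpper_walkVertex _ _ (haltLevel_le hC _) hT, (ih w hw).stepUpper _ _]

theorem levelCount_le_upCount (t : ℕ) {i : ℕ} (hi : i ≤ k) :
    levelCount ω i t ≤ upCount ω i t := by
  have hblocked := isBlocked_of_mem_clusterAt ω t
  rcases Nat.eq_zero_or_pos i with rfl | hi0
  · rw [upCount_zero]
    have hsub : (clusterAt ω t).1.filter (fun w => levelOf w = 0) ⊆ {Vertex.source} := by
      intro w hw
      rw [Finset.mem_filter] at hw
      cases w <;> simp [levelOf] at hw ⊢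
    split_ifs with hs
    · exact (Finset.card_le_card hsub).trans_eq (Finset.card_singleton _)
    · refine (Finset.card_le_card fun w hw => ?_).trans_eq Finset.card_empty
      obtain rfl := Finset.mem_singleton.1 (hsub hw)
      exact absurd (hblocked _ (Finset.mem_filter.1 hw).1) hs
  · obtain ⟨l, rfl⟩ := exists_fin_add_one_eq hi0 hi
    rw [upCount_succ]
    refine (Finset.card_le_card fun w hw => ?_).trans (Finset.card_image_le (f := Vertex.mid l))
    obtain ⟨hwC, hwl⟩ := Finset.mem_filter.1 hw
    cases w with
    | source => simp [levelOf] at hwl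
    | sink => simp [levelOf] at hwl; omega
    | mid j x =>
      obtain rfl : j = l := Fin.ext (by simpa [levelOf] using hwl)
      exact Finset.mem_image_of_mem _ (hblocked _ hwC)

end Coupling

section Counts

variable (ω : ℕ → Particle k N) (t : ℕ)

theorem card_upperAt_snd_last (l : Fin k) (hl : (l : ℕ) + 1 = k) (ht : t ≤ N l) :
    ((upperAt ω t).2 l).card = t := by
  induction t with
  | zero => simp [upperAt]
  | succ t ih =>
    rw [upperAt, card_stepUpper_snd _ _ _ (by omega), ih (by omega), if_pos]
    rw [show (l : ℕ) + 2 = k + 1 by omega]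
    exact upTest_sink _ _

theorem upCount_last (hk : 1 ≤ k) (ht : t ≤ N ⟨k - 1, Nat.sub_lt hk Nat.one_pos⟩) :
    upCount ω k t = t := by
  rw [upCount, dif_pos ⟨hk, le_rfl⟩]
  exact card_upperAt_snd_last ω t _ (by simp only; omega) ht

theorem upperAt_congr {ω ω' : ℕ → Particle k N} {t : ℕ} (h : ∀ s < t, ω s = ω' s) :
    upperAt ω t = upperAt ω' t := by
  induction t with
  | zero => rfl
  | succ t ih => rw [upperAt, upperAt, ih fun s hs => h s (by omega), h t (by omega)]

theorem upperAt_update_succ (u : Particle k N) :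
    upperAt (Function.update ω t u) (t + 1) = stepUpper (upperAt ω t) u := by
  rw [upperAt, upperAt_congr fun s hs => Function.update_of_ne hs.ne _ _, Function.update_self]

theorem upCount_update_succ {i : ℕ} (hi : i ≤ k) (hlt : (upCount ω i t : ℝ) < Nlevel N i)
    (u : Particle k N) :
    upCount (Function.update ω t u) i (t + 1) =
      upCount ω i t + if upTest (upperAt ω t).2 u (i + 1) then 1 else 0 := by
  rcases Nat.eq_zero_or_pos i with rfl | hi0
  · rw [upCount_zero, Nlevel_zero] at hlt
    have hs : (upperAt ω t).1 = false := by
      cases h : (upperAt ω t).1 <;> simp_all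
    rw [upCount_zero, upCount_zero, upperAt_update_succ]
    by_cases hT : upTest (upperAt ω t).2 u 1 <;> simp [stepUpper, hT, hs]
  · obtain ⟨l, rfl⟩ := exists_fin_add_one_eq hi0 hi
    rw [upCount_succ, Nlevel_succ] at hlt
    rw [upCount_succ, upCount_succ, upperAt_update_succ,
      card_stepUpper_snd _ _ _ (by exact_mod_cast hlt)]

theorem expect_upTest_upperAt (hN : ∀ i, 0 < N i) {j : ℕ} (hj : j ≤ k) :
    𝔼 u : Particle k N, (if upTest (upperAt ω t).2 u (j + 1) then (1 : ℝ) else 0) =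
      upCount ω (j + 1) t / Nlevel N (j + 1) := by
  have : ∀ i, Nonempty (Fin (N i)) := fun i => ⟨⟨0, hN i⟩⟩
  rcases hj.lt_or_eq with hj | rfl
  · obtain ⟨l, rfl⟩ : ∃ l : Fin k, (l : ℕ) = j := ⟨⟨j, hj⟩, rfl⟩
    simp_rw [upTest_succ]
    rw [Fintype.expect_comp_eval (α := fun i => Fin (N i)) l
        fun x => if x ∈ (upperAt ω t).2 l then (1 : ℝ) else 0,
      Fintype.expect_eq_sum_div_card, Finset.sum_boole, upCount_succ, Nlevel_succ]
    simp
  · simp [upTest_sink, upCount_sink, Nlevel_sink]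

end Counts

end LayeredDLA

/-- For the layered DLA process coupled with its upper-blocked
process: (i) for all `i` and `t`, `B_i(t) ⊆ B̂_i(t)` (at every level, including the
source level), hence `L_i(t) ≤ L̂_i(t)`, and `L̂_k(t) = t` (as long as layer `k` is
not exhausted); (ii) on the event that `L̂_j(t) < N_j` for every `j`, the conditional
expectation given the history `Ĥ(t)` (the average over the particle used at step
`t+1`, all previous particles being fixed) satisfies
`E(L̂_i(t+1) | Ĥ(t)) = L̂_i(t) + L̂_{i+1}(t)/N_{i+1}` for every `0 ≤ i ≤ k`, where
`L̂_{k+1}(t) = 1` and `N_{k+1} = 1`. -/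
theorem upper_blocked_process_properties
    (k : ℕ) (N : Fin k → ℕ) (hk : 1 ≤ k) (hN : ∀ i, 0 < N i) :
    (∀ (ω : ℕ → Particle k N) (t : ℕ),
      ((Vertex.source ∈ (clusterAt ω t).1 → (upperAt ω t).1 = true) ∧
        (∀ (i : Fin k) (x : Fin (N i)),
          Vertex.mid i x ∈ (clusterAt ω t).1 → x ∈ (upperAt ω t).2 i)) ∧
      (∀ i ≤ k, levelCount ω i t ≤ upCount ω i t) ∧
      (t ≤ N ⟨k - 1, by omega⟩ → upCount ω k t = t)) ∧
    (∀ (ω : ℕ → Particle k N) (t : ℕ),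
      (∀ j ≤ k, (upCount ω j t : ℝ) < Nlevel N j) →
      ∀ i ≤ k,
        (∑ u : Particle k N, (upCount (Function.update ω t u) i (t + 1) : ℝ)) /
            (Fintype.card (Particle k N) : ℝ) =
          (upCount ω i t : ℝ) + (upCount ω (i + 1) t : ℝ) / Nlevel N (i + 1)) := by
  refine ⟨fun ω t => ⟨?_, fun i hi => levelCount_le_upCount ω t hi, upCount_last ω t hk⟩,
    fun ω t hlt i hi => ?_⟩
  · have hblocked := isBlocked_of_mem_clusterAt ω t
    exact ⟨hblocked _, fun i x => hblocked _⟩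
  · have : Nonempty (Particle k N) := ⟨fun i => ⟨0, hN i⟩⟩
    rw [← Fintype.expect_eq_sum_div_card]
    calc 𝔼 u, (upCount (Function.update ω t u) i (t + 1) : ℝ)
        = 𝔼 u : Particle k N, ((upCount ω i t : ℝ) +
            if upTest (upperAt ω t).2 u (i + 1) then 1 else 0) :=
          Finset.expect_congr rfl fun u _ => by
            rw [upCount_update_succ ω t hi (hlt i hi)]
            push_cast
            rfl
      _ = _ := by
          rw [Finset.expect_add_distrib, Fintype.expect_const, expect_upTest_upperAt ω t hN hi]
end

section
/- Let k ≥ 0 and let N_1, …, N_k be positive reals. Define a_i : ℕ → ℝ by a_k(t) = t and, for 0 ≤ i < k, a_i(t) = (1/N_{i+1}) · ∑_{s=0}^{t−1} a_{i+1}(s). Then for every 0 ≤ j ≤ k and every t ∈ ℕ: N_k · N_{k−1} ⋯ N_{k−j+1} · a_{k−j}(t) ≤ t^{j+1}/(j+1)!, and if t ≥ j then N_k · N_{k−1} ⋯ N_{k−j+1} · a_{k−j}(t) ≥ (t−j)^{j+1}/(j+1)!. -/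
/-! Rescaled by `N k ⋯ N (k - j + 1)`, the level `a (k - j)` is the `j`-fold iterated partial
sum of `t ↦ t`, which by the hockey-stick identity is `t.choose (j + 1)`. Both bounds are then the
standard estimates `(t - j) ^ (j + 1) / (j + 1)! ≤ t.choose (j + 1) ≤ t ^ (j + 1) / (j + 1)!`. -/

open Finset

theorem sum_range_choose_eq_choose_succ (m t : ℕ) :
    ∑ s ∈ range t, s.choose m = t.choose (m + 1) := by
  induction t with
  | zero => simp
  | succ t ih => rw [sum_range_succ, ih, Nat.choose_succ_succ', add_comm]

theorem eq_choose_of_iterate_partial_sums {R : Type*} [AddCommMonoidWithOne R] {n : ℕ}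
    (f : ℕ → ℕ → R) (h_zero : ∀ t, f 0 t = t)
    (h_succ : ∀ j < n, ∀ t, f (j + 1) t = ∑ s ∈ range t, f j s) :
    ∀ j ≤ n, ∀ t, f j t = t.choose (j + 1) := by
  intro j
  induction j with
  | zero => simp [h_zero]
  | succ j ih =>
    intro hj t
    rw [h_succ j hj, sum_congr rfl fun s _ => ih (by omega) s, ← Nat.cast_sum,
      sum_range_choose_eq_choose_succ]

theorem prod_mul_level_succ {k : ℕ} {N : ℕ → ℝ} {a : ℕ → ℕ → ℝ} (hN : ∀ i, 1 ≤ i → i ≤ k → 0 < N i)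
    (ha : ∀ i < k, ∀ t : ℕ, a i t = (1 / N (i + 1)) * ∑ s ∈ range t, a (i + 1) s)
    {j : ℕ} (hj : j < k) (t : ℕ) :
    (∏ l ∈ range (j + 1), N (k - l)) * a (k - (j + 1)) t =
      ∑ s ∈ range t, (∏ l ∈ range j, N (k - l)) * a (k - j) s := by
  have hN_ne : N (k - j) ≠ 0 := (hN _ (by omega) (by omega)).ne'
  rw [ha _ (by omega), show k - (j + 1) + 1 = k - j by omega, prod_range_succ, ← mul_sum]
  field_simp

/-- Let `k ≥ 0` and let `N_1, …, N_k` be positive reals.  Define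
`a_i : ℕ → ℝ` by `a_k(t) = t` and, for `0 ≤ i < k`,
`a_i(t) = (1/N_{i+1}) · ∑_{s=0}^{t−1} a_{i+1}(s)` (these are the expected level
occupancies `E L̂_{k−j}(t)` of the upper-blocked process).  Then for every
`0 ≤ j ≤ k` and every `t ∈ ℕ`:
`N_k · N_{k−1} ⋯ N_{k−j+1} · a_{k−j}(t) ≤ t^(j+1)/(j+1)!`, and if `t ≥ j` then
`N_k · N_{k−1} ⋯ N_{k−j+1} · a_{k−j}(t) ≥ (t−j)^(j+1)/(j+1)!`. -/
theorem expected_upper_occupancy_bounds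
    (k : ℕ) (N : ℕ → ℝ) (hN : ∀ i, 1 ≤ i → i ≤ k → 0 < N i)
    (a : ℕ → ℕ → ℝ)
    (hak : ∀ t : ℕ, a k t = t)
    (ha : ∀ i < k, ∀ t : ℕ, a i t = (1 / N (i + 1)) * ∑ s ∈ Finset.range t, a (i + 1) s) :
    ∀ j ≤ k, ∀ t : ℕ,
      (∏ l ∈ Finset.range j, N (k - l)) * a (k - j) t ≤
          (t : ℝ) ^ (j + 1) / (Nat.factorial (j + 1) : ℝ) ∧
      (j ≤ t →
        ((t : ℝ) - j) ^ (j + 1) / (Nat.factorial (j + 1) : ℝ) ≤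
          (∏ l ∈ Finset.range j, N (k - l)) * a (k - j) t) := by
  have h_choose := eq_choose_of_iterate_partial_sums
    (fun j t => (∏ l ∈ range j, N (k - l)) * a (k - j) t) (by simp [hak])
    fun j hj t => prod_mul_level_succ hN ha hj t
  intro j hj t
  rw [h_choose j hj t]
  refine ⟨Nat.choose_le_pow_div (j + 1) t, fun hjt => ?_⟩
  have h_lower := Nat.pow_le_choose (α := ℝ) (j + 1) t
  rwa [show t + 1 - (j + 1) = t - j by omega, Nat.cast_sub hjt] at h_lower
end
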